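/- (Bihari inequality, comparison form.) Let κ : ℝ₊ → ℝ₊ be concave, non-decreasing, continuous with κ(0) = 0 and κ(y) > 0 for y > 0. Let c > 0, let φ : [0,T] → ℝ₊ be integrable, and suppose the bounded measurable function μ : [0,T] → ℝ₊ satisfies μ(t) ≤ c + ∫₀ᵗ φ(s) κ(μ(s)) ds. Define ω(t) = ∫_c^t dv/κ(v). Then for each t ∈ [0,T] with ω(c) + ∫₀ᵗ φ(s) ds in the range of ω, one has μ(t) ≤ ω⁻¹(ω(c) + ∫₀ᵗ φ(s) ds). -/

import Mathlib

/-!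
Let `F t = c + ∫₀ᵗ φ κ(μ)`, so that `μ ≤ F`, and `F` is absolutely continuous with
`F' = φ κ(μ) ≤ φ κ(F)` almost everywhere. Since `ω` is Lipschitz on the range of `F`, the
composite `ω ∘ F` is absolutely continuous too, with `(ω ∘ F)' = F' / κ(F) ≤ φ` almost everywhere;
integrating, `ω (F t) - ω c ≤ ∫₀ᵗ φ = ω s - ω c`. As `ω` is strictly increasing, `μ t ≤ F t ≤ s`.
-/

open MeasureTheory Set intervalIntegral Filter
open scoped NNReal

theorem LipschitzOnWith.comp_absolutelyContinuousOnInterval {X Y : Type*} [PseudoMetricSpace X]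
    [PseudoMetricSpace Y] {g : Y → X} {f : ℝ → Y} {s : Set Y} {K : ℝ≥0} {a b : ℝ}
    (hg : LipschitzOnWith K g s) (hf : AbsolutelyContinuousOnInterval f a b)
    (hfs : MapsTo f (uIcc a b) s) : AbsolutelyContinuousOnInterval (g ∘ f) a b := by
  have hKf := Tendsto.const_mul (K : ℝ) hf
  rw [mul_zero] at hKf
  refine squeeze_zero' (Eventually.of_forall fun E => Finset.sum_nonneg fun i _ => dist_nonneg)
    ?_ hKf
  filter_upwards [mem_inf_of_right (mem_principal_self _)] with E hE
  rw [Finset.mul_sum]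
  gcongr with i hi
  exact hg.dist_le_mul _ (hfs (hE.1 i hi).1) _ (hfs (hE.1 i hi).2)

theorem ContinuousOn.exists_lipschitzOnWith_intervalIntegral {E : Type*} [NormedAddCommGroup E]
    [NormedSpace ℝ E] {f : ℝ → E} {a b : ℝ} (hf : ContinuousOn f (Icc a b)) :
    ∃ K, LipschitzOnWith K (fun x => ∫ v in a..x, f v) (Icc a b) := by
  obtain ⟨C, hC⟩ := isCompact_Icc.exists_bound_of_continuousOn hf
  have hint : ∀ x ∈ Icc a b, ∀ y ∈ Icc a b, IntervalIntegrable f volume x y :=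
    fun x hx y hy => (hf.mono (uIcc_subset_Icc hx hy)).intervalIntegrable
  refine ⟨C.toNNReal, LipschitzOnWith.of_dist_le' fun x hx y hy => ?_⟩
  have ha : a ∈ Icc a b := ⟨le_rfl, hx.1.trans hx.2⟩
  rw [dist_eq_norm, integral_interval_sub_left (hint a ha x hx) (hint a ha y hy), Real.dist_eq]
  exact norm_integral_le_of_norm_le_const fun z hz =>
    hC z (uIcc_subset_Icc hy hx (uIoc_subset_uIcc hz))

theorem strictMonoOn_intervalIntegral_of_pos {g : ℝ → ℝ} {c : ℝ} (hg : ContinuousOn g (Ici c))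
    (hpos : ∀ y ∈ Ici c, 0 < g y) : StrictMonoOn (fun x => ∫ v in c..x, g v) (Ici c) := by
  have hint : ∀ x ∈ Ici c, ∀ y ∈ Ici c, IntervalIntegrable g volume x y := fun x hx y hy =>
    (hg.mono fun z hz => (le_min hx hy).trans hz.1).intervalIntegrable
  intro x hx y hy hxy
  dsimp only
  rw [← sub_pos, integral_interval_sub_left (hint c self_mem_Ici y hy) (hint c self_mem_Ici x hx)]
  exact intervalIntegral_pos_of_pos_on (hint x hx y hy)
    (fun z hz => hpos z (hx.trans hz.1.le)) hxy

theorem MeasureTheory.IntegrableOn.mul_comp_of_mapsTo_Icc {φ μ κ : ℝ → ℝ} {s : Set ℝ} {B : ℝ}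
    (hs : MeasurableSet s) (hφ : IntegrableOn φ s) (hμ : Measurable μ)
    (hκ : ContinuousOn κ (Ici 0)) (hμs : MapsTo μ s (Icc 0 B)) :
    IntegrableOn (fun x => φ x * κ (μ x)) s := by
  obtain ⟨C, hC⟩ := isCompact_Icc.exists_bound_of_continuousOn (hκ.mono Icc_subset_Ici_self)
  have hκ' : Continuous fun y => κ (max y 0) :=
    hκ.comp_continuous (continuous_id.max continuous_const) fun y => le_max_right y 0
  refine hφ.mul_bdd (c := C) ?_
    ((ae_restrict_iff' hs).2 (Eventually.of_forall fun x hx => hC _ (hμs hx)))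
  refine (hκ'.comp_aestronglyMeasurable hμ.aestronglyMeasurable).congr ?_
  filter_upwards [ae_restrict_mem hs] with x hx
  simp [max_eq_left (hμs hx).1]

theorem integral_one_div_le_of_deriv_le_mul {κ φ F : ℝ → ℝ} {a b c : ℝ} (hab : a ≤ b)
    (hc : 0 < c) (hκ : ContinuousOn κ (Ioi 0)) (hκpos : ∀ y > 0, 0 < κ y)
    (hF : AbsolutelyContinuousOnInterval F a b) (hFc : ∀ x ∈ Icc a b, c ≤ F x)
    (hφ : IntervalIntegrable φ volume a b)
    (hF' : ∀ᵐ x, x ∈ Icc a b → deriv F x ≤ φ x * κ (F x)) :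
    ∫ v in F a..F b, 1 / κ v ≤ ∫ x in a..b, φ x := by
  set ω : ℝ → ℝ := fun y => ∫ v in c..y, 1 / κ v
  have hg : ContinuousOn (fun v => 1 / κ v) (Ioi 0) :=
    continuousOn_const.div hκ fun y hy => (hκpos y hy).ne'
  have hgint : ∀ y ≥ c, IntervalIntegrable (fun v => 1 / κ v) volume c y := fun y hy =>
    (hg.mono fun v hv => hc.trans_le (le_min le_rfl hy |>.trans hv.1)).intervalIntegrable
  have hω' : ∀ y ≥ c, HasDerivAt ω (1 / κ y) y := fun y hy =>
    integral_hasDerivAt_right (hgint y hy)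
      (hg.stronglyMeasurableAtFilter isOpen_Ioi y (hc.trans_le hy))
      (hg.continuousAt (Ioi_mem_nhds (hc.trans_le hy)))
  obtain ⟨M, hM⟩ := hF.exists_bound
  obtain ⟨K, hK⟩ := (hg.mono fun v hv => hc.trans_le hv.1).exists_lipschitzOnWith_intervalIntegral
    (a := c) (b := M)
  have hωF : AbsolutelyContinuousOnInterval (ω ∘ F) a b := by
    refine hK.comp_absolutelyContinuousOnInterval hF fun x hx => ⟨?_, ?_⟩
    · exact hFc x (uIcc_of_le hab ▸ hx)
    · exact (le_abs_self _).trans (hM x hx)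
  have hderiv : deriv (ω ∘ F) ≤ᵐ[volume.restrict (Icc a b)] φ := by
    rw [EventuallyLE, ae_restrict_iff' measurableSet_Icc]
    filter_upwards [hF.ae_differentiableAt, hF'] with x hdiff hle hx
    have hκF : 0 < κ (F x) := hκpos _ (hc.trans_le (hFc x hx))
    rw [((hω' _ (hFc x hx)).comp x (hdiff (uIcc_of_le hab ▸ hx)).hasDerivAt).deriv,
      one_div_mul_eq_div, div_le_iff₀ hκF]
    exact hle hx
  calc ∫ v in F a..F b, 1 / κ v = ω (F b) - ω (F a) :=
        (integral_interval_sub_left (hgint _ (hFc b (right_mem_Icc.2 hab)))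
          (hgint _ (hFc a (left_mem_Icc.2 hab)))).symm
    _ = ∫ x in a..b, deriv (ω ∘ F) x := hωF.integral_deriv_eq_sub.symm
    _ ≤ ∫ x in a..b, φ x := integral_mono_ae_restrict hab hωF.intervalIntegrable_deriv hφ hderiv

theorem le_of_integral_le_integral_one_div {κ φ μ : ℝ → ℝ} {c t s : ℝ} (ht : 0 ≤ t)
    (hc : 0 < c) (hκmono : MonotoneOn κ (Ici 0)) (hκ : ContinuousOn κ (Ioi 0)) (hκ0 : κ 0 = 0)
    (hκpos : ∀ y > 0, 0 < κ y) (hφ : IntervalIntegrable φ volume 0 t)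
    (hφnn : ∀ x ∈ Icc 0 t, 0 ≤ φ x) (hμnn : ∀ x ∈ Icc 0 t, 0 ≤ μ x)
    (hψ : IntervalIntegrable (fun x => φ x * κ (μ x)) volume 0 t)
    (hμ : ∀ x ∈ Icc 0 t, μ x ≤ c + ∫ y in 0..x, φ y * κ (μ y))
    (hs : c ≤ s) (hωs : ∫ x in 0..t, φ x ≤ ∫ v in c..s, 1 / κ v) : μ t ≤ s := by
  set F : ℝ → ℝ := fun x => c + ∫ y in 0..x, φ y * κ (μ y)
  have hψnn : ∀ x ∈ Icc 0 t, 0 ≤ φ x * κ (μ x) := fun x hx =>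
    mul_nonneg (hφnn x hx) (hκ0 ▸ hκmono self_mem_Ici (hμnn x hx) (hμnn x hx))
  have hFc : ∀ x ∈ Icc 0 t, c ≤ F x := fun x hx =>
    le_add_of_nonneg_right (integral_nonneg hx.1 fun y hy => hψnn y ⟨hy.1, hy.2.trans hx.2⟩)
  have hF : AbsolutelyContinuousOnInterval F 0 t :=
    (LipschitzWith.const c).lipschitzOnWith.absolutelyContinuousOnInterval.add
      (hψ.absolutelyContinuousOnInterval_intervalIntegral left_mem_uIcc)
  have hF' : ∀ᵐ x, x ∈ Icc 0 t → deriv F x ≤ φ x * κ (F x) := by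
    filter_upwards [hψ.ae_hasDerivAt_integral] with x hx hxt
    rw [((hx (uIcc_of_le ht ▸ hxt) 0 left_mem_uIcc).const_add c).deriv]
    exact mul_le_mul_of_nonneg_left
      (hκmono (hμnn x hxt) ((hμnn x hxt).trans (hμ x hxt)) (hμ x hxt)) (hφnn x hxt)
  have hωF : ∫ v in c..F t, 1 / κ v ≤ ∫ v in c..s, 1 / κ v := by
    simpa [F] using (integral_one_div_le_of_deriv_le_mul ht hc hκ hκpos hF hFc hφ hF').trans hωs
  have hω : StrictMonoOn (fun x => ∫ v in c..x, 1 / κ v) (Ici c) :=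
    strictMonoOn_intervalIntegral_of_pos
      (continuousOn_const.div (hκ.mono fun y hy => hc.trans_le hy)
        fun y hy => (hκpos y (hc.trans_le hy)).ne')
      fun y hy => one_div_pos.2 (hκpos y (hc.trans_le hy))
  have ht' : t ∈ Icc 0 t := right_mem_Icc.2 ht
  exact (hμ t ht').trans ((hω.le_iff_le (hFc t ht') hs).1 hωF)

theorem stmt5_general (T : ℝ) (c : ℝ) (hc : 0 < c) (κ φ μ : ℝ → ℝ)
    (hκmono : MonotoneOn κ (Set.Ici 0))
    (hκcont : ContinuousOn κ (Set.Ici 0)) (hκ0 : κ 0 = 0)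
    (hκpos : ∀ y > (0 : ℝ), 0 < κ y)
    (hφint : MeasureTheory.IntegrableOn φ (Set.Icc 0 T))
    (hφnn : ∀ t ∈ Set.Icc (0 : ℝ) T, 0 ≤ φ t)
    (hμmeas : Measurable μ) (hμnn : ∀ t ∈ Set.Icc (0 : ℝ) T, 0 ≤ μ t)
    (B : ℝ) (hμbd : ∀ t ∈ Set.Icc (0 : ℝ) T, μ t ≤ B)
    (hineq : ∀ t ∈ Set.Icc (0 : ℝ) T, μ t ≤ c + ∫ s in (0 : ℝ)..t, φ s * κ (μ s)) :
    -- with ω (t) = ∫ v in c..t, 1/κ v, if `ω c + ∫₀ᵗ φ` is in the range of ω, say it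
    -- equals ω s with s ≥ c, then μ t ≤ s = ω⁻¹(ω c + ∫₀ᵗ φ)
    ∀ t ∈ Set.Icc (0 : ℝ) T, ∀ s ≥ c,
      (∫ v in c..s, 1 / κ v) = (∫ v in c..c, 1 / κ v) + (∫ v in (0 : ℝ)..t, φ v) →
      μ t ≤ s := by
  intro t ht s hs hωs
  have hsub : Icc 0 t ⊆ Icc 0 T := Icc_subset_Icc_right ht.2
  have hφt : IntegrableOn φ (Icc 0 t) := hφint.mono_set hsub
  have hψt : IntegrableOn (fun x => φ x * κ (μ x)) (Icc 0 t) :=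
    hφt.mul_comp_of_mapsTo_Icc (B := B) measurableSet_Icc hμmeas hκcont fun x hx =>
      ⟨hμnn x (hsub hx), hμbd x (hsub hx)⟩
  rw [integral_same, zero_add] at hωs
  exact le_of_integral_le_integral_one_div ht.1 hc hκmono (hκcont.mono Ioi_subset_Ici_self) hκ0
    hκpos ((intervalIntegrable_iff_integrableOn_Icc_of_le ht.1).2 hφt)
    (fun x hx => hφnn x (hsub hx)) (fun x hx => hμnn x (hsub hx))
    ((intervalIntegrable_iff_integrableOn_Icc_of_le ht.1).2 hψt) (fun x hx => hineq x (hsub hx))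
    hs hωs.ge

theorem stmt5 (T : ℝ) (hT : 0 ≤ T) (c : ℝ) (hc : 0 < c) (κ φ μ : ℝ → ℝ)
    (hκconc : ConcaveOn ℝ (Set.Ici 0) κ) (hκmono : MonotoneOn κ (Set.Ici 0))
    (hκcont : ContinuousOn κ (Set.Ici 0)) (hκ0 : κ 0 = 0)
    (hκpos : ∀ y > (0 : ℝ), 0 < κ y)
    (hφmeas : Measurable φ) (hφint : MeasureTheory.IntegrableOn φ (Set.Icc 0 T))
    (hφnn : ∀ t ∈ Set.Icc (0 : ℝ) T, 0 ≤ φ t)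
    (hμmeas : Measurable μ) (hμnn : ∀ t ∈ Set.Icc (0 : ℝ) T, 0 ≤ μ t)
    (B : ℝ) (hμbd : ∀ t ∈ Set.Icc (0 : ℝ) T, μ t ≤ B)
    (hineq : ∀ t ∈ Set.Icc (0 : ℝ) T, μ t ≤ c + ∫ s in (0 : ℝ)..t, φ s * κ (μ s)) :
    -- with ω (t) = ∫ v in c..t, 1/κ v, if `ω c + ∫₀ᵗ φ` is in the range of ω, say it
    -- equals ω s with s ≥ c, then μ t ≤ s = ω⁻¹(ω c + ∫₀ᵗ φ)
    ∀ t ∈ Set.Icc (0 : ℝ) T, ∀ s ≥ c,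
      (∫ v in c..s, 1 / κ v) = (∫ v in c..c, 1 / κ v) + (∫ v in (0 : ℝ)..t, φ v) →
      μ t ≤ s :=
  stmt5_general T c hc κ φ μ hκmono hκcont hκ0 hκpos hφint hφnn hμmeas hμnn B hμbd hineq
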